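/- Let G be a finite simple graph without isolated vertices and let D be an optimal dominating set in G. Suppose |D| = 5, α(G[D]) ≤ 2, and G[D] has no isolated vertices. Then there is an ordering (d₁, …, d₅) of D and a pair of independent sets R₁ and R₂ such that, where (V₁, …, V₅) is the standard partition of V(G) ∖ D with respect to this ordering, R₁ is an ISR for (V₁, V₂, V₃) and R₂ is an ISR for (V₄, V₅). -/

import Mathlib

/-- `D` is a dominating set of `G`: every vertex lies in `D` or has a neighbor in `D`. -/
def IsDomSet {V : Type*} (G : SimpleGraph V) (D : Set V) : Prop :=
  ∀ v : V, v ∈ D ∨ ∃ u ∈ D, G.Adj u v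

/-- `S` is an independent set of `G`. -/
def IsIndep {V : Type*} (G : SimpleGraph V) (S : Set V) : Prop :=
  S.Pairwise fun u v => ¬ G.Adj u v

/-- The domination number of `G`: the minimum size of a dominating set. -/
noncomputable def gamma {V : Type*} (G : SimpleGraph V) : ℕ :=
  sInf {n | ∃ D : Set V, IsDomSet G D ∧ D.ncard = n}

/-- The independence number of `G`: the maximum size of an independent set. -/
noncomputable def alpha {V : Type*} (G : SimpleGraph V) : ℕ :=
  sSup {n | ∃ S : Set V, IsIndep G S ∧ S.ncard = n}

/-- The inverse domination number of `G`: the minimum size of a dominating set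
disjoint from some minimum dominating set. -/
noncomputable def invGamma {V : Type*} (G : SimpleGraph V) : ℕ :=
  sInf {n | ∃ D T : Set V, IsDomSet G D ∧ D.ncard = gamma G ∧
    IsDomSet G T ∧ D ∩ T = ∅ ∧ T.ncard = n}

/-- The independence number of the subgraph of `G` induced by `D`. -/
noncomputable def alphaOn {V : Type*} (G : SimpleGraph V) (D : Set V) : ℕ :=
  sSup {n | ∃ S : Set V, S ⊆ D ∧ IsIndep G S ∧ S.ncard = n}

/-- The number of edges of the subgraph of `G` induced by `D`. -/
noncomputable def edgeCountOn {V : Type*} (G : SimpleGraph V) (D : Set V) : ℕ :=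
  {e ∈ G.edgeSet | ∀ v ∈ e, v ∈ D}.ncard

/-- `D` is an optimal dominating set: of minimum size; among those, `G[D]` has
maximum independence number; and subject to that, `G[D]` has fewest edges. -/
def IsOptimalDomSet {V : Type*} (G : SimpleGraph V) (D : Set V) : Prop :=
  IsDomSet G D ∧ D.ncard = gamma G ∧
  (∀ D' : Set V, IsDomSet G D' → D'.ncard = gamma G → alphaOn G D' ≤ alphaOn G D) ∧
  (∀ D' : Set V, IsDomSet G D' → D'.ncard = gamma G →
    alphaOn G D' = alphaOn G D → edgeCountOn G D ≤ edgeCountOn G D')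

/-- `w` is a private neighbor of `v` with respect to `D`: `w ∉ D` and `N(w) ∩ D = {v}`. -/
def IsPrivateNbr {V : Type*} (G : SimpleGraph V) (D : Set V) (v w : V) : Prop :=
  w ∉ D ∧ G.Adj v w ∧ ∀ u ∈ D, G.Adj u w → u = v

/-- `R` is a partial independent set of representatives (partial ISR) for the family `P`:
an independent set consisting of distinct representatives of some subfamily of `P`. -/
def IsPartialISR {V : Type*} (G : SimpleGraph V) {n : ℕ} (P : Fin n → Set V)
    (R : Set V) : Prop :=
  IsIndep G R ∧ ∃ (J : Set (Fin n)) (x : Fin n → V),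
    Set.InjOn x J ∧ (∀ j ∈ J, x j ∈ P j) ∧ R = x '' J

/-- `b(G)`: the largest number of vertices of an induced bipartite subgraph of `G`. -/
noncomputable def bipNum {V : Type*} (G : SimpleGraph V) : ℕ :=
  sSup {n | ∃ B A : Set V, A ⊆ B ∧ IsIndep G A ∧ IsIndep G (B \ A) ∧ B.ncard = n}

/-!
Every vertex of `D` has a private neighbour, because `D` minus one vertex is too small to
dominate. Call `u, v ∈ D` bad if every private neighbour of `u` is adjacent to every private
neighbour of `v`. For a bad pair, exchanging `v` for a private neighbour of `u` gives another
minimum dominating set with the same independence number, so minimality of the number of edges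
forces `v` to have at most one neighbour in `G[D]`; together with `α(G[D]) ≤ 2` this makes `u` a
leaf of `G[D]` attached to `v`. Using this one finds `b, c ∈ D` with independent private
neighbours `q₁, q₂` such that `{b, c}` dominates `D` and no two other vertices of `D` form a bad
pair. A vertex `w` not dominated by the four vertices `b, c, q₁, q₂` lies outside `D` and is
dominated by some `a ∈ D`. For the ordering `(a, b, c, s, t)` of `D`, the private neighbours of
each `dᵢ` lie in `Vᵢ`, so `R₁ = {w, q₁, q₂}` works, and `R₂` consists of independent private
neighbours of `s` and `t`.
-/

section

variable {V : Type*} {G : SimpleGraph V} {D : Set V}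

lemma isIndep_pair (a b : V) : IsIndep G {a, b} ↔ ¬ G.Adj a b := by
  simp only [IsIndep, Set.pairwise_pair, G.adj_comm b a, and_self]
  grind [SimpleGraph.irrefl]

lemma isIndep_triple (a b c : V) :
    IsIndep G {a, b, c} ↔ ¬ G.Adj a b ∧ ¬ G.Adj a c ∧ ¬ G.Adj b c := by
  simp only [IsIndep, Set.pairwise_insert, Set.pairwise_singleton, Set.mem_insert_iff,
    Set.mem_singleton_iff, forall_eq_or_imp, forall_eq, G.adj_comm b a, G.adj_comm c a,
    G.adj_comm c b, and_self, true_and]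
  grind [SimpleGraph.irrefl]

lemma ncard_le_four (a b c d : V) : ({a, b, c, d} : Set V).ncard ≤ 4 := by
  classical
  simpa [← Set.ncard_coe_finset] using Finset.card_le_four (a := a) (b := b) (c := c) (d := d)

lemma ncard_le_alphaOn [Finite V] {S X : Set V} (hSX : S ⊆ X) (hS : IsIndep G S) :
    S.ncard ≤ alphaOn G X :=
  le_csSup ⟨Nat.card V, by rintro _ ⟨S', -, -, rfl⟩; exact Set.ncard_le_card S'⟩ ⟨S, hSX, hS, rfl⟩

lemma adj_or_adj_of_alphaOn_le_two [Finite V] (hα : alphaOn G D ≤ 2) {a b c : V}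
    (ha : a ∈ D) (hb : b ∈ D) (hc : c ∈ D) (hab : a ≠ b) (hac : a ≠ c) (hbc : b ≠ c)
    (hnab : ¬ G.Adj a b) : G.Adj a c ∨ G.Adj b c := by
  by_contra! h
  have hsub : ({a, b, c} : Set V) ⊆ D := by simp [Set.insert_subset_iff, ha, hb, hc]
  have := ncard_le_alphaOn hsub ((isIndep_triple a b c).2 ⟨hnab, h.1, h.2⟩)
  rw [Set.ncard_eq_three.2 ⟨a, b, c, hab, hac, hbc, rfl⟩] at this
  omega

lemma gamma_le_ncard {T : Set V} (hT : IsDomSet G T) : gamma G ≤ T.ncard :=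
  Nat.sInf_le ⟨T, hT, rfl⟩

lemma exists_not_dominated_of_ncard_lt_gamma {T : Set V} (hT : T.ncard < gamma G) :
    ∃ w ∉ T, ∀ u ∈ T, ¬ G.Adj u w := by
  have hT' : ¬ IsDomSet G T := fun h => (gamma_le_ncard h).not_gt hT
  simpa [IsDomSet] using hT'

lemma exists_isPrivateNbr [Finite V] (hdom : IsDomSet G D) (hmin : D.ncard = gamma G) {v : V}
    (hv : v ∈ D) (hvD : ∃ u ∈ D, G.Adj v u) : ∃ p, IsPrivateNbr G D v p := by
  have hlt : (D \ {v}).ncard < gamma G := by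
    rw [Set.ncard_sdiff_singleton_of_mem hv, ← hmin]
    have := (Set.ncard_pos (s := D)).2 ⟨v, hv⟩
    omega
  obtain ⟨w, hwT, hw⟩ := exists_not_dominated_of_ncard_lt_gamma hlt
  have hwv : w ≠ v := by
    rintro rfl
    obtain ⟨u, hu, hwu⟩ := hvD
    exact hw u ⟨hu, hwu.ne'⟩ hwu.symm
  have hwD : w ∉ D := fun h => hwT ⟨h, hwv⟩
  have honly : ∀ u ∈ D, G.Adj u w → u = v := fun u hu huw =>
    by_contra fun huv => hw u ⟨hu, huv⟩ huw
  obtain ⟨u, hu, huw⟩ := (hdom w).resolve_left hwD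
  exact ⟨w, hwD, honly u hu huw ▸ huw, honly⟩

lemma IsDomSet.insert_sdiff_singleton (hdom : IsDomSet G D) {v p : V}
    (hv : ∃ u ∈ D, u ≠ v ∧ G.Adj u v) (hp : ∀ q, IsPrivateNbr G D v q → G.Adj p q) :
    IsDomSet G (insert p (D \ {v})) := by
  intro x
  by_cases hx : x ∈ D \ {v}
  · exact Or.inl (Set.mem_insert_of_mem p hx)
  by_cases hnbr : ∃ u ∈ D \ {v}, G.Adj u x
  · obtain ⟨u, hu, hux⟩ := hnbr
    exact Or.inr ⟨u, Set.mem_insert_of_mem p hu, hux⟩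
  push Not at hnbr
  have hxD : x ∉ D := by
    intro hxD
    obtain ⟨u, hu, huv, hux⟩ := hv
    have hxv : x = v := by_contra fun h => hx ⟨hxD, h⟩
    exact hnbr u ⟨hu, huv⟩ (hxv ▸ hux)
  have honly : ∀ u ∈ D, G.Adj u x → u = v := fun u hu hux =>
    by_contra fun huv => hnbr u ⟨hu, huv⟩ hux
  obtain ⟨u, hu, hux⟩ := (hdom x).resolve_left hxD
  exact Or.inr ⟨p, Set.mem_insert p _, hp x ⟨hxD, honly u hu hux ▸ hux, honly⟩⟩

lemma edgeCountOn_insert [Finite V] {X : Set V} {v : V} (hv : v ∉ X) :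
    edgeCountOn G (insert v X) = edgeCountOn G X + {u ∈ X | G.Adj v u}.ncard := by
  have hsplit : {e ∈ G.edgeSet | ∀ x ∈ e, x ∈ insert v X} =
      {e ∈ G.edgeSet | ∀ x ∈ e, x ∈ X} ∪ (fun u => s(v, u)) '' {u ∈ X | G.Adj v u} := by
    ext e
    induction e using Sym2.ind with
    | _ x y =>
      simp only [Set.mem_insert_iff, Set.mem_ofPred_eq, SimpleGraph.mem_edgeSet, Sym2.mem_iff,
        forall_eq_or_imp, forall_eq, Set.mem_union, Set.mem_image, Sym2.eq, Sym2.rel_iff',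
        Prod.mk.injEq, Prod.swap_prod_mk]
      grind [SimpleGraph.irrefl, SimpleGraph.adj_symm]
  have hdisj : Disjoint {e ∈ G.edgeSet | ∀ x ∈ e, x ∈ X}
      ((fun u => s(v, u)) '' {u ∈ X | G.Adj v u}) := by
    rw [Set.disjoint_right]
    rintro _ ⟨u, -, rfl⟩ ⟨-, h⟩
    exact hv (h v (Sym2.mem_mk_left v u))
  rw [edgeCountOn, edgeCountOn, hsplit, Set.ncard_union_eq hdisj,
    Set.ncard_image_of_injective _ fun _ _ => Sym2.congr_right.mp]

/-- Exchanging `v` for `p` keeps `D` dominating, of minimum size and of the same independence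
number; optimality then says that this exchange cannot remove edges from `G[D]`. -/
lemma IsOptimalDomSet.subsingleton_adj_of_forall_adj_isPrivateNbr [Finite V]
    (hopt : IsOptimalDomSet G D) (hα : alphaOn G D ≤ 2) (hD : 3 ≤ D.ncard) {u v p : V}
    (hv : v ∈ D) (huv : u ≠ v) (hp : IsPrivateNbr G D u p)
    (hpq : ∀ q, IsPrivateNbr G D v q → G.Adj p q) :
    {z ∈ D | G.Adj v z}.Subsingleton := by
  obtain ⟨hdom, hmin, hα_max, hedge_min⟩ := hopt
  rintro z ⟨hz, hvz⟩ z' ⟨hz', hvz'⟩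
  by_contra hzz'
  set D' := insert p (D \ {v})
  have hdom' : IsDomSet G D' := hdom.insert_sdiff_singleton ⟨z, hz, hvz.ne', hvz.symm⟩ hpq
  have hpD : p ∉ D \ {v} := fun h => hp.1 h.1
  have hcard' : D'.ncard = gamma G := by
    rw [Set.ncard_insert_of_notMem hpD, Set.ncard_sdiff_singleton_of_mem hv, ← hmin]
    omega
  obtain ⟨z₀, hz₀, hz₀uv⟩ := Set.exists_mem_notMem_of_ncard_lt_ncard
    (s := {u, v}) (t := D) (by rw [Set.ncard_pair huv]; omega)
  simp only [Set.mem_insert_iff, Set.mem_singleton_iff, not_or] at hz₀uv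
  have hpz₀ : IsIndep G {p, z₀} :=
    (isIndep_pair p z₀).2 fun h => hz₀uv.1 (hp.2.2 z₀ hz₀ h.symm)
  have hα' : alphaOn G D' = alphaOn G D := by
    refine le_antisymm (hα_max D' hdom' hcard') (hα.trans ?_)
    have hsub : ({p, z₀} : Set V) ⊆ D' :=
      Set.insert_subset_insert (Set.singleton_subset_iff.2 ⟨hz₀, hz₀uv.2⟩)
    rw [← Set.ncard_pair (a := p) (b := z₀) (by rintro rfl; exact hp.1 hz₀)]
    exact ncard_le_alphaOn hsub hpz₀
  have hedge := hedge_min D' hdom' hcard' hα'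
  have hp1 : {w ∈ D \ {v} | G.Adj p w}.ncard ≤ 1 := by
    refine (Set.ncard_le_ncard (t := {u}) ?_).trans (Set.ncard_singleton u).le
    rintro w ⟨hw, hpw⟩
    exact hp.2.2 w hw.1 hpw.symm
  have hv2 : 2 ≤ {w ∈ D \ {v} | G.Adj v w}.ncard := by
    rw [← Set.ncard_pair hzz']
    refine Set.ncard_le_ncard ?_
    simp [Set.insert_subset_iff, hz, hz', hvz, hvz', hvz.ne', hvz'.ne']
  rw [← Set.insert_eq_of_mem hv, ← Set.insert_sdiff_singleton,
    edgeCountOn_insert (fun h => h.2 rfl), edgeCountOn_insert hpD] at hedge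
  omega

def HasIndepPrivateNbrs (G : SimpleGraph V) (D : Set V) (u v : V) : Prop :=
  ∃ p q, IsPrivateNbr G D u p ∧ IsPrivateNbr G D v q ∧ ¬ G.Adj p q

lemma HasIndepPrivateNbrs.symm {u v : V} (h : HasIndepPrivateNbrs G D u v) :
    HasIndepPrivateNbrs G D v u :=
  let ⟨p, q, hp, hq, hpq⟩ := h
  ⟨q, p, hq, hp, fun h => hpq h.symm⟩

lemma IsOptimalDomSet.subsingleton_adj_of_not_hasIndepPrivateNbrs [Finite V]
    (hopt : IsOptimalDomSet G D) (hα : alphaOn G D ≤ 2) (hD : 3 ≤ D.ncard) {u v : V}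
    (hu : u ∈ D) (hv : v ∈ D) (huv : u ≠ v) (hu' : ∃ w ∈ D, G.Adj u w)
    (h : ¬ HasIndepPrivateNbrs G D u v) : {z ∈ D | G.Adj v z}.Subsingleton := by
  obtain ⟨p, hp⟩ := exists_isPrivateNbr hopt.1 hopt.2.1 hu hu'
  exact hopt.subsingleton_adj_of_forall_adj_isPrivateNbr hα hD hv huv hp fun q hq =>
    by_contra fun hpq => h ⟨p, q, hp, hq, hpq⟩

lemma IsOptimalDomSet.adj_iff_of_not_hasIndepPrivateNbrs [Finite V]
    (hopt : IsOptimalDomSet G D) (hα : alphaOn G D ≤ 2) (hD : 5 ≤ D.ncard)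
    (hnoiso : ∀ v ∈ D, ∃ u ∈ D, G.Adj v u) {u v : V} (hu : u ∈ D) (hv : v ∈ D) (huv : u ≠ v)
    (h : ¬ HasIndepPrivateNbrs G D u v) : ∀ z ∈ D, G.Adj u z ↔ z = v := by
  obtain ⟨m, hm, hum⟩ := hnoiso u hu
  obtain ⟨m', hm', hvm'⟩ := hnoiso v hv
  have hum_only : ∀ z ∈ D, G.Adj u z → z = m := fun z hz huz =>
    hopt.subsingleton_adj_of_not_hasIndepPrivateNbrs hα (by omega) hv hu huv.symm
      (hnoiso v hv) (fun h' => h h'.symm) ⟨hz, huz⟩ ⟨hm, hum⟩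
  have hvm'_only : ∀ z ∈ D, G.Adj v z → z = m' := fun z hz hvz =>
    hopt.subsingleton_adj_of_not_hasIndepPrivateNbrs hα (by omega) hu hv huv
      (hnoiso u hu) h ⟨hz, hvz⟩ ⟨hm', hvm'⟩
  suffices hmv : m = v by
    intro z hz
    exact ⟨fun huz => (hum_only z hz huz).trans hmv, by rintro rfl; exact hmv ▸ hum⟩
  by_contra hmv
  have hsmall : ({u, v, m, m'} : Set V).ncard < D.ncard := (ncard_le_four u v m m').trans_lt hD
  obtain ⟨w, hw, hwQ⟩ := Set.exists_mem_notMem_of_ncard_lt_ncard hsmall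
  simp only [Set.mem_insert_iff, Set.mem_singleton_iff, not_or] at hwQ
  obtain ⟨hwu, hwv, hwm, hwm'⟩ := hwQ
  have huv' : ¬ G.Adj u v := fun h => hmv (hum_only v hv h).symm
  rcases adj_or_adj_of_alphaOn_le_two hα hu hv hw huv (Ne.symm hwu) (Ne.symm hwv) huv' with
    huw | hvw
  · exact hwm (hum_only w hw huw)
  · exact hwm' (hvm'_only w hw hvw)

/-- The pair that becomes `(d₂, d₃)` in the ordering of `D`; any two of the remaining vertices
can then be `(d₄, d₅)`. -/
structure IsGoodPair (G : SimpleGraph V) (D : Set V) (b c : V) : Prop where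
  left_mem : b ∈ D
  right_mem : c ∈ D
  ne : b ≠ c
  hasIndepPrivateNbrs : HasIndepPrivateNbrs G D b c
  adj_or_adj : ∀ w ∈ D, w ≠ b → w ≠ c → G.Adj b w ∨ G.Adj c w
  hasIndepPrivateNbrs_of_ne : ∀ s ∈ D, ∀ t ∈ D, s ≠ b → s ≠ c → t ≠ b → t ≠ c → s ≠ t →
    HasIndepPrivateNbrs G D s t

lemma IsOptimalDomSet.exists_isGoodPair_of_not_hasIndepPrivateNbrs [Finite V]
    (hopt : IsOptimalDomSet G D) (hα : alphaOn G D ≤ 2) (hD : 5 ≤ D.ncard)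
    (hnoiso : ∀ v ∈ D, ∃ u ∈ D, G.Adj v u) {u v : V} (hu : u ∈ D) (hv : v ∈ D) (huv : u ≠ v)
    (h : ¬ HasIndepPrivateNbrs G D u v) : ∃ x, IsGoodPair G D u x := by
  have hleaf := hopt.adj_iff_of_not_hasIndepPrivateNbrs hα hD hnoiso hu hv huv h
  obtain ⟨x, hx, hxuv⟩ := Set.exists_mem_notMem_of_ncard_lt_ncard
    (s := {u, v}) (t := D) (by rw [Set.ncard_pair huv]; omega)
  simp only [Set.mem_insert_iff, Set.mem_singleton_iff, not_or] at hxuv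
  obtain ⟨hxu, hxv⟩ := hxuv
  have hux : ¬ G.Adj u x := fun h => hxv ((hleaf x hx).1 h)
  have hdom : ∀ w ∈ D, w ≠ u → w ≠ x → G.Adj u w ∨ G.Adj x w := fun w hw hwu hwx =>
    adj_or_adj_of_alphaOn_le_two hα hu hx hw (Ne.symm hxu) (Ne.symm hwu) (Ne.symm hwx) hux
  have hrest : ∀ s ∈ D, ∀ t ∈ D, s ≠ u → s ≠ x → s ≠ v → t ≠ x → s ≠ t →
      HasIndepPrivateNbrs G D s t := by
    intro s hs t ht hsu hsx hsv htx hst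
    by_contra hst'
    have hxs : G.Adj x s := (hdom s hs hsu hsx).resolve_left fun h => hsv ((hleaf s hs).1 h)
    exact htx ((hopt.adj_iff_of_not_hasIndepPrivateNbrs hα hD hnoiso hs ht hst hst' x hx).1
      hxs.symm).symm
  refine ⟨x, hu, hx, Ne.symm hxu, ?_, hdom, ?_⟩
  · by_contra hux'
    exact hux ((hopt.adj_iff_of_not_hasIndepPrivateNbrs hα hD hnoiso hx hu hxu
      (fun h => hux' h.symm) u hu).2 rfl).symm
  · intro s hs t ht hsu hsx htu htx hst
    by_cases hsv : s = v
    · exact (hrest t ht s hs htu htx (fun htv => hst (hsv.trans htv.symm)) hsx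
        (Ne.symm hst)).symm
    · exact hrest s hs t ht hsu hsx hsv htx hst

lemma exists_pair_adj_or_adj [Finite V] (hα : alphaOn G D ≤ 2) (hD : 1 < D.ncard) :
    ∃ b ∈ D, ∃ c ∈ D, b ≠ c ∧ ∀ w ∈ D, w ≠ b → w ≠ c → G.Adj b w ∨ G.Adj c w := by
  by_cases h : ∃ b ∈ D, ∃ c ∈ D, b ≠ c ∧ ¬ G.Adj b c
  · obtain ⟨b, hb, c, hc, hbc, hnbc⟩ := h
    exact ⟨b, hb, c, hc, hbc, fun w hw hwb hwc =>
      adj_or_adj_of_alphaOn_le_two hα hb hc hw hbc (Ne.symm hwb) (Ne.symm hwc) hnbc⟩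
  · push Not at h
    obtain ⟨b, hb, c, hc, hbc⟩ := (Set.one_lt_ncard).1 hD
    exact ⟨b, hb, c, hc, hbc, fun w hw hwb _ => Or.inl (h b hb w hw (Ne.symm hwb))⟩

lemma IsOptimalDomSet.exists_isGoodPair [Finite V] (hopt : IsOptimalDomSet G D)
    (hα : alphaOn G D ≤ 2) (hD : 5 ≤ D.ncard) (hnoiso : ∀ v ∈ D, ∃ u ∈ D, G.Adj v u) :
    ∃ b c, IsGoodPair G D b c := by
  by_cases h : ∃ u ∈ D, ∃ v ∈ D, u ≠ v ∧ ¬ HasIndepPrivateNbrs G D u v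
  · obtain ⟨u, hu, v, hv, huv, h⟩ := h
    exact ⟨u, hopt.exists_isGoodPair_of_not_hasIndepPrivateNbrs hα hD hnoiso hu hv huv h⟩
  · push Not at h
    obtain ⟨b, hb, c, hc, hbc, hdom⟩ := exists_pair_adj_or_adj hα (by omega)
    exact ⟨b, c, hb, hc, hbc, h b hb c hc hbc, hdom,
      fun s hs t ht _ _ _ _ hst => h s hs t ht hst⟩

lemma exists_fin_five_of_ncard_eq_five (hD : D.ncard = 5) {a b c : V} (ha : a ∈ D) (hb : b ∈ D)
    (hc : c ∈ D) (hab : a ≠ b) (hac : a ≠ c) (hbc : b ≠ c) :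
    ∃ d : Fin 5 → V, Function.Injective d ∧ Set.range d = D ∧ d 0 = a ∧ d 1 = b ∧ d 2 = c := by
  have hsub : ({a, b, c} : Set V) ⊆ D := by simp [Set.insert_subset_iff, ha, hb, hc]
  obtain ⟨s, t, hst, hrest⟩ := Set.ncard_eq_two.1 (show (D \ {a, b, c}).ncard = 2 by
    rw [Set.ncard_sdiff hsub, hD, Set.ncard_eq_three.2 ⟨a, b, c, hab, hac, hbc, rfl⟩])
  have hs : s ∉ ({a, b, c} : Set V) := (hrest ▸ Set.mem_insert s {t} : s ∈ D \ _).2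
  have ht : t ∉ ({a, b, c} : Set V) := (hrest ▸ Set.mem_insert_of_mem s rfl : t ∈ D \ _).2
  simp only [Set.mem_insert_iff, Set.mem_singleton_iff, not_or] at hs ht
  refine ⟨![a, b, c, s, t], ?_, ?_, rfl, rfl, rfl⟩
  · intro i j h
    fin_cases i <;> fin_cases j <;> simp_all [eq_comm]
  · rw [← Set.union_sdiff_cancel hsub, hrest]
    ext x
    simp only [Matrix.range_cons, Matrix.range_empty, Set.union_empty, Set.union_singleton,
      Set.union_insert, Set.mem_insert_iff, Set.mem_singleton_iff]
    tauto

lemma IsOptimalDomSet.exists_ordering [Finite V] (hopt : IsOptimalDomSet G D)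
    (hD : D.ncard = 5) (hα : alphaOn G D ≤ 2) (hnoiso : ∀ v ∈ D, ∃ u ∈ D, G.Adj v u) :
    ∃ d : Fin 5 → V, Function.Injective d ∧ Set.range d = D ∧
      (∃ w q₁ q₂, w ∉ D ∧ G.Adj (d 0) w ∧ IsPrivateNbr G D (d 1) q₁ ∧
        IsPrivateNbr G D (d 2) q₂ ∧ IsIndep G {w, q₁, q₂}) ∧
      HasIndepPrivateNbrs G D (d 3) (d 4) := by
  obtain ⟨b, c, hbc⟩ := hopt.exists_isGoodPair hα hD.ge hnoiso
  obtain ⟨q₁, q₂, hq₁, hq₂, hq₁₂⟩ := hbc.hasIndepPrivateNbrs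
  obtain ⟨w, hwT, hw⟩ := exists_not_dominated_of_ncard_lt_gamma (G := G) (T := {b, c, q₁, q₂})
    ((ncard_le_four b c q₁ q₂).trans_lt (by rw [← hopt.2.1, hD]; norm_num))
  simp only [Set.mem_insert_iff, Set.mem_singleton_iff, not_or, forall_eq_or_imp,
    forall_eq] at hwT hw
  obtain ⟨hbw, hcw, hq₁w, hq₂w⟩ := hw
  have hwD : w ∉ D := fun hwD =>
    (hbc.adj_or_adj w hwD hwT.1 hwT.2.1).elim hbw hcw
  obtain ⟨a, ha, haw⟩ := (hopt.1 w).resolve_left hwD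
  obtain ⟨d, hd, hdD, rfl, rfl, rfl⟩ := exists_fin_five_of_ncard_eq_five hD ha hbc.left_mem
    hbc.right_mem (by rintro rfl; exact hbw haw) (by rintro rfl; exact hcw haw) hbc.ne
  have hmem : ∀ i, d i ∈ D := fun i => hdD ▸ Set.mem_range_self i
  refine ⟨d, hd, hdD, ⟨w, q₁, q₂, hwD, haw, hq₁, hq₂, ?_⟩, ?_⟩
  · exact (isIndep_triple w q₁ q₂).2 ⟨fun h => hq₁w h.symm, fun h => hq₂w h.symm, hq₁₂⟩
  · exact hbc.hasIndepPrivateNbrs_of_ne _ (hmem 3) _ (hmem 4) (hd.ne (by decide))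
      (hd.ne (by decide)) (hd.ne (by decide)) (hd.ne (by decide)) (hd.ne (by decide))

/-- The standard partition in closed form: a vertex outside `D` belongs to the part of the first
`d i` adjacent to it. -/
def stdPartition (G : SimpleGraph V) (D : Set V) {n : ℕ} (d : Fin n → V) (i : Fin n) : Set V :=
  {w | w ∉ D ∧ G.Adj (d i) w ∧ ∀ j < i, ¬ G.Adj (d j) w}

lemma stdPartition_eq {n : ℕ} (d : Fin n → V) (i : Fin n) :
    stdPartition G D d i =
      {w | w ∈ Set.univ \ D ∧ G.Adj (d i) w} \ ⋃ j < i, stdPartition G D d j := by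
  ext w
  simp only [stdPartition, Set.mem_sdiff, Set.mem_univ, true_and, Set.mem_ofPred_eq,
    Set.mem_iUnion, not_exists]
  refine ⟨fun ⟨hwD, hiw, hlt⟩ => ⟨⟨hwD, hiw⟩, fun j _ hj => hlt j ‹_› hj.2.1⟩, ?_⟩
  rintro ⟨⟨hwD, hiw⟩, hnot⟩
  refine ⟨hwD, hiw, fun j => ?_⟩
  induction j using WellFoundedLT.induction with
  | _ j ih => exact fun hji hjw => hnot j hji ⟨hwD, hjw, fun k hkj => ih k hkj (hkj.trans hji)⟩

lemma IsPrivateNbr.mem_stdPartition {n : ℕ} {d : Fin n → V} (hd : Function.Injective d)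
    (hdD : ∀ j, d j ∈ D) {i : Fin n} {p : V} (hp : IsPrivateNbr G D (d i) p) :
    p ∈ stdPartition G D d i :=
  ⟨hp.1, hp.2.1, fun j hji hjp => hji.ne (hd (hp.2.2 (d j) (hdD j) hjp))⟩

end

theorem super_isrs_general {V : Type*} [Fintype V] (G : SimpleGraph V)
    (D : Set V) (hopt : IsOptimalDomSet G D)
    (hD5 : D.ncard = 5) (hαD : alphaOn G D ≤ 2)
    (hnoiso : ∀ v ∈ D, ∃ u ∈ D, G.Adj v u) :
    ∃ d : Fin 5 → V, Function.Injective d ∧ Set.range d = D ∧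
      ∃ Vpart : Fin 5 → Set V,
        (∀ i : Fin 5, Vpart i =
          {w | w ∈ Set.univ \ D ∧ G.Adj (d i) w} \ ⋃ j < i, Vpart j) ∧
        (∃ r₁ ∈ Vpart 0, ∃ r₂ ∈ Vpart 1, ∃ r₃ ∈ Vpart 2,
          IsIndep G {r₁, r₂, r₃}) ∧
        (∃ r₄ ∈ Vpart 3, ∃ r₅ ∈ Vpart 4, IsIndep G {r₄, r₅}) := by
  obtain ⟨d, hd, hdD, ⟨w, q₁, q₂, hwD, hw, hq₁, hq₂, hindep⟩, q₃, q₄, hq₃, hq₄, hq₃₄⟩ :=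
    hopt.exists_ordering hD5 hαD hnoiso
  have hmem : ∀ i, d i ∈ D := fun i => hdD ▸ Set.mem_range_self i
  have hw₀ : w ∈ stdPartition G D d 0 := ⟨hwD, hw, fun j hj => absurd hj (Fin.not_lt_zero j)⟩
  exact ⟨d, hd, hdD, stdPartition G D d, stdPartition_eq d,
    ⟨w, hw₀, q₁, hq₁.mem_stdPartition hd hmem, q₂, hq₂.mem_stdPartition hd hmem, hindep⟩,
    ⟨q₃, hq₃.mem_stdPartition hd hmem, q₄, hq₄.mem_stdPartition hd hmem,
      (isIndep_pair q₃ q₄).2 hq₃₄⟩⟩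

theorem super_isrs {V : Type*} [Fintype V] (G : SimpleGraph V)
    (hiso : ∀ v : V, ∃ u, G.Adj v u)
    (D : Set V) (hopt : IsOptimalDomSet G D)
    (hD5 : D.ncard = 5) (hαD : alphaOn G D ≤ 2)
    (hnoiso : ∀ v ∈ D, ∃ u ∈ D, G.Adj v u) :
    ∃ d : Fin 5 → V, Function.Injective d ∧ Set.range d = D ∧
      ∃ Vpart : Fin 5 → Set V,
        (∀ i : Fin 5, Vpart i =
          {w | w ∈ Set.univ \ D ∧ G.Adj (d i) w} \ ⋃ j < i, Vpart j) ∧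
        (∃ r₁ ∈ Vpart 0, ∃ r₂ ∈ Vpart 1, ∃ r₃ ∈ Vpart 2,
          IsIndep G {r₁, r₂, r₃}) ∧
        (∃ r₄ ∈ Vpart 3, ∃ r₅ ∈ Vpart 4, IsIndep G {r₄, r₅}) :=
  super_isrs_general G D hopt hD5 hαD hnoiso
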